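/- Let $\Xi_N = (\Xi_{ij})_{1\le i,j\le N}$ be an $N\times N$ symmetric centered Gaussian random matrix with $\mathbb{E}[\Xi_{ij}\Xi_{kl}] = \mathcal{F}(i,j,k,l)$ where $\mathcal{F}$ is a fully symmetric function of its four arguments, and let $B_N$ be a deterministic real symmetric $N\times N$ matrix. Then $\mathbb{E}[\det(\Xi_N + B_N)] = \det(B_N)$. -/

import Mathlib

open MeasureTheory ProbabilityTheory

/-- A symmetric centered Gaussian random matrix: every linear combination of its
entries is a centered Gaussian random variable. -/
def IsCenteredGaussianMatrix {Ω : Type*} [MeasureSpace Ω] {n : ℕ}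
    (Ξ : Fin n → Fin n → Ω → ℝ) : Prop :=
  ∀ a : Fin n → Fin n → ℝ, ∃ v : NNReal,
    Measure.map (fun ω => ∑ i, ∑ j, a i j * Ξ i j ω) (ℙ : Measure Ω) = gaussianReal 0 v

/-!
Expanding the determinant multilinearly,
`E det(Ξ + B) = ∑_S ∑_σ sgn σ · E[∏_{i ∈ S} Ξ_{σ i, i}] · ∏_{i ∉ S} B_{σ i, i}`,
and the term `S = ∅` is `det B`. By polarization, `∏_{i ∈ S} x_i` is a signed combination of the
powers `(∑_{i ∈ ε} x_i) ^ |S|`, `ε ⊆ S`; each `∑_{i ∈ ε} Ξ_{σ i, i}` is a centered Gaussian, whose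
moments are powers of its variance. Expanding those variances back and undoing the polarization
gives Wick's formula: the moment is a multiple of a sum, over the pairings of `S`, of products of
covariances `F(σ a, a, σ b, b)`, one for each pair `(a, b)`. For a fixed pairing, replacing `σ` by
`σ ∘ (a b)` for one of its pairs flips `sgn σ` and, because `F(σ a, a, σ b, b) = F(σ b, a, σ a, b)`,
changes nothing else; so the sum over `σ` vanishes for every nonempty `S`.
-/

open Finset
open scoped NNReal

section Combinatorics

variable {ι R : Type*} [DecidableEq ι] [CommRing R]

theorem sum_powerset_neg_one_pow_card_sdiff (U : Finset ι) :
    ∑ δ ∈ U.powerset, (-1 : R) ^ #(U \ δ) = if U = ∅ then 1 else 0 := by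
  have h := prod_add (fun _ => (1 : R)) (fun _ => -1) U
  simp only [add_neg_cancel, prod_const_one, one_mul, prod_const] at h
  simp [← h, zero_pow_eq]

theorem sum_powerset_filter_superset_neg_one_pow (S T : Finset ι) :
    ∑ ε ∈ S.powerset with T ⊆ ε, (-1 : R) ^ #(S \ ε) = if T = S then 1 else 0 := by
  by_cases hTS : T ⊆ S
  · have hIcc : {ε ∈ S.powerset | T ⊆ ε} = Icc T S := by ext; simp [and_comm]
    rw [hIcc, Icc_eq_image_powerset hTS, sum_image]
    · simp_rw [sdiff_union_distrib, ← Finset.sdiff_sdiff_left']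
      simp [sum_powerset_neg_one_pow_card_sdiff, subset_antisymm_iff (a := T), hTS]
    · intro δ hδ δ' hδ' h
      simp only [coe_powerset, Set.mem_preimage, Set.mem_powerset_iff, coe_subset] at hδ hδ'
      rw [← union_sdiff_cancel_left (disjoint_of_subset_right hδ disjoint_sdiff),
        ← union_sdiff_cancel_left (disjoint_of_subset_right hδ' disjoint_sdiff)]
      exact congrArg (· \ T) h
  · rw [if_neg (fun h => hTS h.le), sum_eq_zero]
    intro ε hε
    simp only [mem_filter, mem_powerset] at hε
    exact absurd (hε.2.trans hε.1) hTS

theorem sum_powerset_neg_one_pow_mul_sum_pow {α : Type*} [Fintype α]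
    (supp : α → Finset ι) (y : α → R) (S : Finset ι) (n : ℕ) :
    ∑ ε ∈ S.powerset, (-1 : R) ^ #(S \ ε) * (∑ a with supp a ⊆ ε, y a) ^ n =
      ∑ w : Fin n → α with univ.biUnion (fun r => supp (w r)) = S, ∏ r, y (w r) := by
  have hpow : ∀ ε : Finset ι, (∑ a with supp a ⊆ ε, y a) ^ n =
      ∑ w : Fin n → α, if univ.biUnion (fun r => supp (w r)) ⊆ ε then ∏ r, y (w r) else 0 := by
    intro ε
    rw [sum_pow', ← sum_filter]
    congr 1
    ext w
    simp
  simp_rw [hpow, mul_sum]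
  rw [sum_comm, sum_filter]
  refine sum_congr rfl fun w _ => ?_
  simp_rw [mul_ite, mul_zero, ← sum_filter, ← sum_mul, sum_powerset_filter_superset_neg_one_pow,
    ite_mul, one_mul, zero_mul]

def pairsSupport {k : ℕ} (h : Fin k → ι × ι) : Finset ι :=
  univ.biUnion fun r => {(h r).1, (h r).2}

/-- `k` pairs touching at least `2 * k` points are pairwise disjoint pairs of distinct points. -/
theorem injective_sumElim_of_two_mul_le_card_pairsSupport {k : ℕ} {h : Fin k → ι × ι}
    (hk : 2 * k ≤ #(pairsSupport h)) :
    Function.Injective (Sum.elim (fun r => (h r).1) (fun r => (h r).2)) := by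
  have himage : univ.image (Sum.elim (fun r => (h r).1) (fun r => (h r).2)) = pairsSupport h := by
    ext i
    simp [pairsSupport, eq_comm, exists_or]
  rw [← Set.injOn_univ, ← coe_univ, ← card_image_iff]
  refine le_antisymm card_image_le ?_
  rw [himage, card_univ, Fintype.card_sum, Fintype.card_fin]
  omega

variable [Fintype ι]

/-- Polarization; the number of surjections `Fin #S → S` appearing here is `(#S)!`. -/
theorem sum_powerset_neg_one_pow_mul_sum_pow_card (S : Finset ι) (x : ι → R) :
    ∑ ε ∈ S.powerset, (-1 : R) ^ #(S \ ε) * (∑ i ∈ ε, x i) ^ #S =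
      #{g : Fin #S → ι | univ.image g = S} * ∏ i ∈ S, x i := by
  have h := sum_powerset_neg_one_pow_mul_sum_pow (fun i => {i}) x S #S
  simp only [singleton_subset_iff, filter_mem_eq_inter, univ_inter, biUnion_singleton] at h
  rw [h, ← nsmul_eq_mul, ← sum_const, sum_filter, sum_filter]
  refine sum_congr rfl fun g _ => ?_
  split_ifs with hg
  · have hinj : Set.InjOn g (univ : Finset (Fin #S)) :=
      card_image_iff.mp (by rw [hg, card_univ, Fintype.card_fin])
    rw [← prod_image hinj, hg]
  · rfl

theorem card_filter_image_eq_pos (S : Finset ι) : 0 < #{g : Fin #S → ι | univ.image g = S} := by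
  refine card_pos.mpr ⟨fun r => S.equivFin.symm r, mem_filter.mpr ⟨mem_univ _, ?_⟩⟩
  ext i
  simpa using ⟨by rintro ⟨r, rfl⟩; exact coe_mem _, fun hi => ⟨S.equivFin ⟨i, hi⟩, by simp⟩⟩

theorem sum_powerset_neg_one_pow_mul_sum_sum_pow (S : Finset ι) (C : ι → ι → R) (k : ℕ) :
    ∑ ε ∈ S.powerset, (-1 : R) ^ #(S \ ε) * (∑ i ∈ ε, ∑ j ∈ ε, C i j) ^ k =
      ∑ h : Fin k → ι × ι with pairsSupport h = S, ∏ r, C (h r).1 (h r).2 := by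
  have h := sum_powerset_neg_one_pow_mul_sum_pow (fun p : ι × ι => {p.1, p.2})
    (fun p => C p.1 p.2) S k
  have hpairs : ∀ ε : Finset ι, ({p : ι × ι | {p.1, p.2} ⊆ ε} : Finset (ι × ι)) = ε ×ˢ ε := by
    intro ε; ext; simp [insert_subset_iff]
  simp only [hpairs, sum_product] at h
  exact h

theorem sum_perm_sign_mul_eq_zero_of_mul_swap {f : Equiv.Perm ι → R} {a b : ι} (hab : a ≠ b)
    (hf : ∀ σ, f (σ * Equiv.swap a b) = f σ) :
    ∑ σ : Equiv.Perm ι, (Equiv.Perm.sign σ : R) * f σ = 0 := by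
  refine sum_involution (fun σ _ => σ * Equiv.swap a b) (fun σ _ => ?_) (fun σ _ _ => ?_)
    (fun _ _ => mem_univ _) (fun σ _ => by simp [mul_assoc])
  · rw [hf, Equiv.Perm.sign_mul, Equiv.Perm.sign_swap hab]
    push_cast
    ring
  · intro hσ
    have := congrArg (· a) hσ
    simp only [Equiv.Perm.mul_apply, Equiv.swap_apply_left, EmbeddingLike.apply_eq_iff_eq] at this
    exact hab this.symm

theorem sum_perm_sign_mul_prod_pairs_eq_zero (K : ι × ι → ι × ι → R)
    (hK : ∀ a b c d, K (a, b) (c, d) = K (c, b) (a, d)) (B : Matrix ι ι R) {k : ℕ}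
    (h : Fin k → ι × ι) (hne : (pairsSupport h).Nonempty) (hk : 2 * k ≤ #(pairsSupport h)) :
    ∑ σ : Equiv.Perm ι, (Equiv.Perm.sign σ : R) * ((∏ i ∈ (pairsSupport h)ᶜ, B (σ i) i) *
      ∏ r, K (σ (h r).1, (h r).1) (σ (h r).2, (h r).2)) = 0 := by
  set e : Fin k ⊕ Fin k → ι := Sum.elim (fun r => (h r).1) (fun r => (h r).2)
  have he : e.Injective := injective_sumElim_of_two_mul_le_card_pairsSupport hk
  obtain ⟨_, hx⟩ := hne
  obtain ⟨r₀, -, -⟩ := mem_biUnion.mp hx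
  have hab : e (.inl r₀) ≠ e (.inr r₀) := he.ne Sum.inl_ne_inr
  have hswap : ∀ x, x ≠ .inl r₀ → x ≠ .inr r₀ →
      Equiv.swap (e (.inl r₀)) (e (.inr r₀)) (e x) = e x :=
    fun x h₁ h₂ => Equiv.swap_apply_of_ne_of_ne (he.ne h₁) (he.ne h₂)
  have hmem : ∀ x, e x ∈ pairsSupport h := by
    rintro (r | r) <;> simpa [e, pairsSupport] using ⟨r, by simp⟩
  refine sum_perm_sign_mul_eq_zero_of_mul_swap hab fun σ => ?_
  congr 1
  · refine prod_congr rfl fun i hi => ?_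
    have hi := mem_compl.mp hi
    rw [Equiv.Perm.mul_apply, Equiv.swap_apply_of_ne_of_ne
      (ne_of_mem_of_not_mem (hmem _) hi).symm (ne_of_mem_of_not_mem (hmem _) hi).symm]
  · refine prod_congr rfl fun r _ => ?_
    change K (σ (Equiv.swap _ _ (e (.inl r))), e (.inl r))
        (σ (Equiv.swap _ _ (e (.inr r))), e (.inr r)) =
      K (σ (e (.inl r)), e (.inl r)) (σ (e (.inr r)), e (.inr r))
    by_cases hr : r = r₀
    · rw [hr, Equiv.swap_apply_left, Equiv.swap_apply_right]
      exact hK _ _ _ _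
    · rw [hswap _ (by simp [hr]) (by simp), hswap _ (by simp) (by simp [hr])]

end Combinatorics

theorem integrable_pow_gaussianReal (m : ℝ) (v : ℝ≥0) (n : ℕ) :
    Integrable (fun x => x ^ n) (gaussianReal m v) := by
  refine (integrable_norm_iff (by fun_prop)).mp ?_
  simpa using (memLp_id_gaussianReal (μ := m) (v := v) n).integrable_norm_pow'

theorem integral_pow_odd_gaussianReal (v : ℝ≥0) (k : ℕ) :
    ∫ x, x ^ (2 * k + 1) ∂gaussianReal 0 v = 0 := by
  have h := integral_map (μ := gaussianReal 0 v) measurable_neg.aemeasurable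
    (f := fun x => x ^ (2 * k + 1)) (by fun_prop)
  rw [gaussianReal_map_neg] at h
  simp only [Odd.neg_pow (odd_two_mul_add_one k), integral_neg, neg_zero] at h
  linarith

theorem integral_pow_gaussianReal_eq_pow_mul (v : ℝ≥0) (n : ℕ) :
    ∫ x, x ^ n ∂gaussianReal 0 v = v ^ (n / 2) * ∫ x, x ^ n ∂gaussianReal 0 1 := by
  have hmap : (gaussianReal 0 1).map (√v * ·) = gaussianReal 0 v := by
    rw [gaussianReal_map_const_mul, mul_zero]
    congr
    ext
    simp
  rw [← hmap, integral_map (by fun_prop) (by fun_prop)]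
  simp_rw [mul_pow, integral_const_mul]
  obtain ⟨k, rfl | rfl⟩ := Nat.even_or_odd' n
  · rw [pow_mul, Real.sq_sqrt v.coe_nonneg, Nat.mul_div_cancel_left k two_pos]
  · simp [integral_pow_odd_gaussianReal]

theorem integral_sq_gaussianReal (v : ℝ≥0) : ∫ x, x ^ 2 ∂gaussianReal 0 v = v := by
  have h := variance_fun_id_gaussianReal (μ := 0) (v := v)
  rw [variance_eq_integral measurable_id'.aemeasurable] at h
  simpa [integral_id_gaussianReal] using h

section GaussianLaw

variable {Ω : Type*} [MeasurableSpace Ω] {μ : Measure Ω} {X : Ω → ℝ} {v : ℝ≥0}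

theorem ProbabilityTheory.HasLaw.integrable_pow_of_gaussianReal
    (hX : HasLaw X (gaussianReal 0 v) μ) (n : ℕ) : Integrable (fun ω => X ω ^ n) μ := by
  have h := integrable_pow_gaussianReal 0 v n
  rw [← hX.map_eq, integrable_map_measure (by fun_prop) hX.aemeasurable] at h
  exact h

theorem ProbabilityTheory.HasLaw.integral_pow_of_gaussianReal
    (hX : HasLaw X (gaussianReal 0 v) μ) (n : ℕ) :
    ∫ ω, X ω ^ n ∂μ = v ^ (n / 2) * ∫ x, x ^ n ∂gaussianReal 0 1 := by
  rw [← integral_pow_gaussianReal_eq_pow_mul, ← hX.integral_comp (f := fun x => x ^ n) (by fun_prop)]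
  rfl

theorem ProbabilityTheory.HasLaw.integral_sq_of_gaussianReal
    (hX : HasLaw X (gaussianReal 0 v) μ) : ∫ ω, X ω ^ 2 ∂μ = v := by
  rw [← integral_sq_gaussianReal, ← hX.integral_comp (f := fun x => x ^ 2) (by fun_prop)]
  rfl

theorem ProbabilityTheory.HasLaw.memLp_of_gaussianReal
    (hX : HasLaw X (gaussianReal 0 v) μ) (p : ℝ≥0) : MemLp X p μ := by
  have h := memLp_id_gaussianReal (μ := 0) (v := v) p
  rw [← hX.map_eq, memLp_map_measure_iff (by fun_prop) hX.aemeasurable] at h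
  exact h

end GaussianLaw

def IsCenteredGaussianFamily {Ω ι : Type*} [MeasurableSpace Ω] [Fintype ι]
    (Y : ι → Ω → ℝ) (μ : Measure Ω) : Prop :=
  ∀ a : ι → ℝ, ∃ v : ℝ≥0, μ.map (fun ω => ∑ i, a i * Y i ω) = gaussianReal 0 v

namespace IsCenteredGaussianFamily

variable {Ω ι : Type*} [MeasurableSpace Ω] {μ : Measure Ω} [Fintype ι] {Y : ι → Ω → ℝ}

theorem comp (hY : IsCenteredGaussianFamily Y μ) {κ : Type*} [Fintype κ] (f : κ → ι) :
    IsCenteredGaussianFamily (fun j => Y (f j)) μ := by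
  classical
  intro a
  obtain ⟨v, hv⟩ := hY fun i => ∑ j with f j = i, a j
  refine ⟨v, Eq.trans ?_ hv⟩
  congr with ω
  refine (sum_fiberwise univ f _).symm.trans (sum_congr rfl fun i _ => ?_)
  rw [sum_mul]
  exact sum_congr rfl fun j hj => by simp only [(mem_filter.mp hj).2]

theorem hasLaw_sum (hY : IsCenteredGaussianFamily Y μ) (ε : Finset ι) :
    ∃ v : ℝ≥0, HasLaw (fun ω => ∑ i ∈ ε, Y i ω) (gaussianReal 0 v) μ := by
  classical
  obtain ⟨v, hv⟩ := hY fun i => if i ∈ ε then 1 else 0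
  have hsum : (fun ω => ∑ i, (if i ∈ ε then 1 else 0) * Y i ω) = fun ω => ∑ i ∈ ε, Y i ω := by
    simp [ite_mul]
  rw [hsum] at hv
  exact ⟨v, ⟨.of_map_ne_zero (hv ▸ IsProbabilityMeasure.ne_zero _), hv⟩⟩

theorem integrable_mul (hY : IsCenteredGaussianFamily Y μ) (i j : ι) :
    Integrable (fun ω => Y i ω * Y j ω) μ := by
  have hL2 : ∀ i, MemLp (Y i) 2 μ := fun i => by
    obtain ⟨v, hv⟩ := hY.hasLaw_sum {i}
    simpa using hv.memLp_of_gaussianReal 2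
  exact (hL2 i).integrable_mul (hL2 j)

theorem integrable_pow_sum (hY : IsCenteredGaussianFamily Y μ) (ε : Finset ι) (n : ℕ) :
    Integrable (fun ω => (∑ i ∈ ε, Y i ω) ^ n) μ := by
  obtain ⟨v, hv⟩ := hY.hasLaw_sum ε
  exact hv.integrable_pow_of_gaussianReal n

theorem integral_pow_sum (hY : IsCenteredGaussianFamily Y μ) (ε : Finset ι) (n : ℕ) :
    ∫ ω, (∑ i ∈ ε, Y i ω) ^ n ∂μ =
      (∫ x, x ^ n ∂gaussianReal 0 1) * (∑ i ∈ ε, ∑ j ∈ ε, ∫ ω, Y i ω * Y j ω ∂μ) ^ (n / 2) := by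
  obtain ⟨v, hv⟩ := hY.hasLaw_sum ε
  have hvar : (v : ℝ) = ∑ i ∈ ε, ∑ j ∈ ε, ∫ ω, Y i ω * Y j ω ∂μ := by
    simp_rw [← hv.integral_sq_of_gaussianReal, sq, sum_mul_sum]
    rw [integral_finsetSum _ fun i _ => integrable_finsetSum _ fun j _ => hY.integrable_mul i j]
    exact sum_congr rfl fun i _ => integral_finsetSum _ fun j _ => hY.integrable_mul i j
  rw [hv.integral_pow_of_gaussianReal, hvar, mul_comm]

variable [DecidableEq ι]

theorem integrable_prod (hY : IsCenteredGaussianFamily Y μ) (S : Finset ι) :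
    Integrable (fun ω => ∏ i ∈ S, Y i ω) μ := by
  have hG : (#{g : Fin #S → ι | univ.image g = S} : ℝ) ≠ 0 :=
    Nat.cast_ne_zero.mpr (card_filter_image_eq_pos S).ne'
  have hpol : (fun ω => ∏ i ∈ S, Y i ω) = fun ω => (#{g : Fin #S → ι | univ.image g = S} : ℝ)⁻¹ *
      ∑ ε ∈ S.powerset, (-1 : ℝ) ^ #(S \ ε) * (∑ i ∈ ε, Y i ω) ^ #S := by
    ext ω
    rw [sum_powerset_neg_one_pow_mul_sum_pow_card, inv_mul_cancel_left₀ hG]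
  rw [hpol]
  exact (integrable_finsetSum _ fun ε _ => (hY.integrable_pow_sum ε _).const_mul _).const_mul _

/-- Wick's formula, up to the constant `∫ x ^ #S ∂N(0, 1) / (#S)!`, over ordered pairings. -/
theorem card_mul_integral_prod (hY : IsCenteredGaussianFamily Y μ) (S : Finset ι) :
    #{g : Fin #S → ι | univ.image g = S} * ∫ ω, ∏ i ∈ S, Y i ω ∂μ =
      (∫ x, x ^ #S ∂gaussianReal 0 1) * ∑ h : Fin (#S / 2) → ι × ι with pairsSupport h = S,
        ∏ r, ∫ ω, Y (h r).1 ω * Y (h r).2 ω ∂μ := by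
  rw [← integral_const_mul]
  simp_rw [← sum_powerset_neg_one_pow_mul_sum_pow_card]
  rw [integral_finsetSum _ fun ε _ => (hY.integrable_pow_sum ε _).const_mul _]
  simp_rw [integral_const_mul, hY.integral_pow_sum,
    mul_left_comm _ (∫ x, x ^ #S ∂gaussianReal 0 1), ← mul_sum,
    sum_powerset_neg_one_pow_mul_sum_sum_pow]

section Determinant

variable {Y : ι × ι → Ω → ℝ}

theorem sum_perm_sign_mul_integral_prod_eq_zero (hY : IsCenteredGaussianFamily Y μ)
    (hcov : ∀ a b c d, ∫ ω, Y (a, b) ω * Y (c, d) ω ∂μ = ∫ ω, Y (c, b) ω * Y (a, d) ω ∂μ)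
    (B : Matrix ι ι ℝ) {S : Finset ι} (hS : S.Nonempty) :
    ∑ σ : Equiv.Perm ι, (Equiv.Perm.sign σ : ℝ) *
      ((∫ ω, ∏ i ∈ S, Y (σ i, i) ω ∂μ) * ∏ i ∈ Sᶜ, B (σ i) i) = 0 := by
  set G : ℝ := ((#{g : Fin #S → ι | univ.image g = S} : ℕ) : ℝ)
  set m := ∫ x, x ^ #S ∂gaussianReal 0 1
  set H : Finset (Fin (#S / 2) → ι × ι) := {h | pairsSupport h = S}
  set K : ι × ι → ι × ι → ℝ := fun p q => ∫ ω, Y p ω * Y q ω ∂μ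
  have hG : G ≠ 0 := Nat.cast_ne_zero.mpr (card_filter_image_eq_pos S).ne'
  have hmoment : ∀ σ : Equiv.Perm ι, G * ∫ ω, ∏ i ∈ S, Y (σ i, i) ω ∂μ =
      m * ∑ h ∈ H, ∏ r, K (σ (h r).1, (h r).1) (σ (h r).2, (h r).2) :=
    fun σ => (hY.comp fun i => (σ i, i)).card_mul_integral_prod S
  refine (mul_eq_zero_iff_left hG).mp ?_
  calc G * ∑ σ : Equiv.Perm ι, (Equiv.Perm.sign σ : ℝ) *
        ((∫ ω, ∏ i ∈ S, Y (σ i, i) ω ∂μ) * ∏ i ∈ Sᶜ, B (σ i) i)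
      = ∑ σ : Equiv.Perm ι, ∑ h ∈ H, m * ((Equiv.Perm.sign σ : ℝ) *
          ((∏ i ∈ (pairsSupport h)ᶜ, B (σ i) i) *
            ∏ r, K (σ (h r).1, (h r).1) (σ (h r).2, (h r).2))) := by
        rw [mul_sum]
        refine sum_congr rfl fun σ _ => ?_
        rw [mul_left_comm, ← mul_assoc G, hmoment, mul_sum, sum_mul, mul_sum]
        refine sum_congr rfl fun h hh => ?_
        rw [(mem_filter.mp hh).2]
        ring
    _ = m * ∑ h ∈ H, ∑ σ : Equiv.Perm ι, (Equiv.Perm.sign σ : ℝ) *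
          ((∏ i ∈ (pairsSupport h)ᶜ, B (σ i) i) *
            ∏ r, K (σ (h r).1, (h r).1) (σ (h r).2, (h r).2)) := by
        rw [sum_comm, mul_sum]
        simp_rw [mul_sum]
    _ = 0 := by
        rw [sum_eq_zero fun h hh => ?_, mul_zero]
        have hh := (mem_filter.mp hh).2
        exact sum_perm_sign_mul_prod_pairs_eq_zero K hcov B h (by rwa [hh]) (by rw [hh]; omega)

theorem integral_det_add (hY : IsCenteredGaussianFamily Y μ) [IsProbabilityMeasure μ]
    (hcov : ∀ a b c d, ∫ ω, Y (a, b) ω * Y (c, d) ω ∂μ = ∫ ω, Y (c, b) ω * Y (a, d) ω ∂μ)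
    (B : Matrix ι ι ℝ) :
    ∫ ω, (Matrix.of fun i j => Y (i, j) ω + B i j).det ∂μ = B.det := by
  have hint : ∀ (σ : Equiv.Perm ι) (S : Finset ι),
      Integrable (fun ω => (∏ i ∈ S, Y (σ i, i) ω) * ∏ i ∈ Sᶜ, B (σ i) i) μ :=
    fun σ S => ((hY.comp fun i => (σ i, i)).integrable_prod S).mul_const _
  simp_rw [Matrix.det_apply', Matrix.of_apply, Fintype.prod_add]
  rw [integral_finsetSum _ fun σ _ => (integrable_finsetSum _ fun S _ => hint σ S).const_mul _]
  simp_rw [integral_const_mul, integral_finsetSum _ fun S _ => hint _ S, integral_mul_const,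
    mul_sum]
  rw [sum_comm, sum_eq_single ∅ (fun S _ hS => hY.sum_perm_sign_mul_integral_prod_eq_zero hcov B
    (nonempty_iff_ne_empty.mpr hS)) (by simp)]
  simp

end Determinant

end IsCenteredGaussianFamily

theorem expected_det_xi_plus_B_general
    {Ω : Type*} [MeasureSpace Ω] [IsProbabilityMeasure (ℙ : Measure Ω)]
    (N : ℕ) (Ξ : Fin N → Fin N → Ω → ℝ)
    (F : Fin N → Fin N → Fin N → Fin N → ℝ)
    (hGauss : IsCenteredGaussianMatrix Ξ)
    (hFsymm : ∀ (v : Fin 4 → Fin N) (σ : Equiv.Perm (Fin 4)),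
      F (v 0) (v 1) (v 2) (v 3) = F (v (σ 0)) (v (σ 1)) (v (σ 2)) (v (σ 3)))
    (hcov : ∀ i j k l, ∫ ω, Ξ i j ω * Ξ k l ω ∂(ℙ : Measure Ω) = F i j k l)
    (B : Matrix (Fin N) (Fin N) ℝ) :
    ∫ ω, (Matrix.of fun i j => Ξ i j ω + B i j).det ∂(ℙ : Measure Ω) = B.det := by
  have hY : IsCenteredGaussianFamily (fun p : Fin N × Fin N => Ξ p.1 p.2) ℙ := fun a => by
    simpa [Fintype.sum_prod_type] using hGauss fun i j => a (i, j)
  refine hY.integral_det_add (fun a b c d => ?_) B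
  rw [hcov, hcov]
  simpa [Equiv.swap_apply_of_ne_of_ne] using hFsymm ![a, b, c, d] (Equiv.swap 0 2)

theorem expected_det_xi_plus_B
    {Ω : Type*} [MeasureSpace Ω] [IsProbabilityMeasure (ℙ : Measure Ω)]
    (N : ℕ) (Ξ : Fin N → Fin N → Ω → ℝ)
    (F : Fin N → Fin N → Fin N → Fin N → ℝ)
    (hΞsymm : ∀ i j ω, Ξ i j ω = Ξ j i ω)
    (hGauss : IsCenteredGaussianMatrix Ξ)
    (hFsymm : ∀ (v : Fin 4 → Fin N) (σ : Equiv.Perm (Fin 4)),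
      F (v 0) (v 1) (v 2) (v 3) = F (v (σ 0)) (v (σ 1)) (v (σ 2)) (v (σ 3)))
    (hcov : ∀ i j k l, ∫ ω, Ξ i j ω * Ξ k l ω ∂(ℙ : Measure Ω) = F i j k l)
    (B : Matrix (Fin N) (Fin N) ℝ) (hB : B.IsSymm) :
    ∫ ω, (Matrix.of fun i j => Ξ i j ω + B i j).det ∂(ℙ : Measure Ω) = B.det :=
  expected_det_xi_plus_B_general N Ξ F hGauss hFsymm hcov B
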